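/- arXiv:1402.1926 — 5 statements merged into one kernel-verified Lean document; each statement's English description precedes it below -/
import Mathlib

section
/- Let m ∈ ℕ and let α = (α₁ α₂) ∈ ℂ^{m×2m} be admissible. Then α*αJ + Jα*α = J, where α*α ∈ ℂ^{2m×2m}. -/
open Matrix

/-- The matrix `J = [[0, −I_m],[I_m, 0]]` in `m × m` blocks. -/
noncomputable def Jmat (m : ℕ) : Matrix (Fin m ⊕ Fin m) (Fin m ⊕ Fin m) ℂ :=
  fromBlocks 0 (-1) 1 0

/-- A matrix `α ∈ ℂ^{m×2m}` is admissible if `αα* = I_m` and `αJα* = 0`. -/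
def Admissible {m : ℕ} (α : Matrix (Fin m) (Fin m ⊕ Fin m) ℂ) : Prop :=
  α * αᴴ = 1 ∧ α * Jmat m * αᴴ = 0

/-!
The rows of `α` and of `αJ` together form an orthonormal basis of `ℂ^{2m}`: `αJα* = 0` makes the
two families orthogonal, and `J` is unitary. The completeness relation for this basis reads
`α*α - Jα*αJ = I`, and multiplying it by `J` on the right gives the claim since `J² = -I`.
-/

namespace Matrix

variable {R : Type*} [CommRing R] [StarRing R] {m₁ m₂ n : Type*} [Fintype m₁] [Fintype m₂]
  [Fintype n] [DecidableEq m₁] [DecidableEq m₂] [DecidableEq n]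

theorem conjTranspose_mul_add_conjTranspose_mul_eq_one (e : n ≃ m₁ ⊕ m₂)
    {A : Matrix m₁ n R} {B : Matrix m₂ n R}
    (hA : A * Aᴴ = 1) (hB : B * Bᴴ = 1) (hAB : A * Bᴴ = 0) :
    Aᴴ * A + Bᴴ * B = 1 := by
  have hBA : B * Aᴴ = 0 := by
    rw [← conjTranspose_conjTranspose B, ← conjTranspose_mul, hAB, conjTranspose_zero]
  rw [← fromCols_mul_fromRows, fromCols_mul_fromRows_eq_one_comm e, fromRows_mul_fromCols,
    hA, hB, hAB, hBA, fromBlocks_one]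

variable {m : Type*} [Fintype m] [DecidableEq m] {J : Matrix n n R}

theorem conjTranspose_mul_self_sub_mul_mul_eq_one (e : n ≃ m ⊕ m) (hJ : Jᴴ = -J)
    (hJJ : J * J = -1) {α : Matrix m n R} (hα : α * αᴴ = 1) (hαJ : α * J * αᴴ = 0) :
    αᴴ * α - J * (αᴴ * α) * J = 1 := by
  have hαJαJ : α * J * (α * J)ᴴ = 1 := by
    rw [conjTranspose_mul, hJ, Matrix.mul_assoc, ← Matrix.mul_assoc J, Matrix.mul_neg, hJJ,
      neg_neg, Matrix.one_mul, hα]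
  have hααJ : α * (α * J)ᴴ = 0 := by
    rw [conjTranspose_mul, hJ, Matrix.neg_mul, Matrix.mul_neg, ← Matrix.mul_assoc, hαJ, neg_zero]
  have hcompl := conjTranspose_mul_add_conjTranspose_mul_eq_one e hα hαJαJ hααJ
  rw [conjTranspose_mul, hJ] at hcompl
  rw [← hcompl]
  simp only [sub_eq_add_neg, Matrix.neg_mul, Matrix.mul_assoc]

theorem conjTranspose_mul_self_mul_add_mul_conjTranspose_mul_self (e : n ≃ m ⊕ m)
    (hJ : Jᴴ = -J) (hJJ : J * J = -1) {α : Matrix m n R} (hα : α * αᴴ = 1)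
    (hαJ : α * J * αᴴ = 0) :
    αᴴ * α * J + J * (αᴴ * α) = J := by
  have h := congrArg (· * J) (conjTranspose_mul_self_sub_mul_mul_eq_one e hJ hJJ hα hαJ)
  simp only [Matrix.sub_mul, Matrix.one_mul, Matrix.mul_assoc, hJJ, Matrix.mul_neg,
    Matrix.mul_one, sub_neg_eq_add] at h
  rwa [← Matrix.mul_assoc] at h

end Matrix

theorem Jmat_conjTranspose (m : ℕ) : (Jmat m)ᴴ = -Jmat m := by
  rw [Jmat, fromBlocks_conjTranspose, fromBlocks_neg]
  simp

theorem Jmat_mul_Jmat (m : ℕ) : Jmat m * Jmat m = -1 := by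
  rw [Jmat, fromBlocks_multiply, ← fromBlocks_one, fromBlocks_neg]
  simp

/-- If `α` is admissible then `α*αJ + Jα*α = J`. -/
theorem statement1 (m : ℕ) (α : Matrix (Fin m) (Fin m ⊕ Fin m) ℂ)
    (hα : Admissible α) :
    αᴴ * α * Jmat m + Jmat m * (αᴴ * α) = Jmat m :=
  conjTranspose_mul_self_mul_add_mul_conjTranspose_mul_self (Equiv.refl _)
    (Jmat_conjTranspose m) (Jmat_mul_Jmat m) hα.1 hα.2
end

section
/- Let m ∈ ℕ, let α = (α₁ α₂) ∈ ℂ^{m×2m} be admissible, and let M ∈ ℂ^{m×m} be such that the Hermitian matrix Im(M) := (M − M*)/(2i) is positive semidefinite. Then M + iI_m is invertible, and the matrix (α₁* + iα₂*)(M − iI_m)(M + iI_m)^{−1}(α₁ + iα₂) is a contraction, i.e., its operator norm is at most 1. (This is the assertion that the transformed Weyl–Titchmarsh matrix M̂^D(ζ) = (α₁* + iα₂*)[M^D_+(ζ,α) − iI_m][M^D_+(ζ,α) + iI_m]^{−1}(α₁ + iα₂) is contractive on ℂ₊.) -/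
open Matrix
open scoped ComplexOrder

/-!
Admissibility of `(α₁ α₂)` makes `α₁ + iα₂` and `α₁* + iα₂*` unitary, so
multiplying by them does not change the operator norm, and it remains to see that the Cayley
transform `C = (M − i)(M + i)⁻¹` is a contraction. With `N = M + i`, `D = M − i` and
`P = Im M ⪰ 0` one has `N*N = M*M + 1 + 2P`, which is positive definite, so `N` is invertible,
and `N*N − D*D = 4P`, whence `1 − C*C = N⁻*(4P)N⁻¹ ⪰ 0`.
-/

open Complex

theorem admissible_fromCols_iff {m : ℕ} {α₁ α₂ : Matrix (Fin m) (Fin m) ℂ} :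
    Admissible (fromCols α₁ α₂) ↔ α₁ * α₁ᴴ + α₂ * α₂ᴴ = 1 ∧ α₂ * α₁ᴴ = α₁ * α₂ᴴ := by
  simp only [Admissible, Jmat, conjTranspose_fromCols_eq_fromRows_conjTranspose,
    fromCols_mul_fromRows, fromCols_mul_fromBlocks, mul_zero, mul_one, mul_neg, zero_add,
    add_zero, neg_mul, ← sub_eq_add_neg, sub_eq_zero]

theorem two_smul_inv_two_mul_I_smul {V : Type*} [AddCommGroup V] [Module ℂ V] (x : V) :
    (2 : ℂ) • (2 * I)⁻¹ • x = -I • x := by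
  rw [smul_smul]
  congr 1
  field_simp
  simp

namespace Matrix

variable {n : Type*} [Fintype n] [DecidableEq n]

section Unitary

variable {A B : Matrix n n ℂ}

theorem add_I_smul_mem_unitary (h₁ : A * Aᴴ + B * Bᴴ = 1) (h₂ : B * Aᴴ = A * Bᴴ) :
    A + I • B ∈ unitary (Matrix n n ℂ) := by
  rw [← Matrix.unitaryGroup, mem_unitaryGroup_iff, star_eq_conjTranspose]
  calc (A + I • B) * (A + I • B)ᴴ = A * Aᴴ + B * Bᴴ + I • (B * Aᴴ - A * Bᴴ) := by
        simp only [conjTranspose_add, conjTranspose_smul, star_def, conj_I, mul_add, add_mul,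
          smul_mul_assoc, mul_smul_comm, smul_sub]
        match_scalars <;> simp
    _ = 1 := by rw [h₁, h₂, sub_self, smul_zero, add_zero]

theorem conjTranspose_add_I_smul_mem_unitary (h₁ : A * Aᴴ + B * Bᴴ = 1) (h₂ : B * Aᴴ = A * Bᴴ) :
    Aᴴ + I • Bᴴ ∈ unitary (Matrix n n ℂ) := by
  have h : Aᴴ + I • Bᴴ = star (A + I • -B) := by simp [star_eq_conjTranspose, conj_I]
  rw [h]
  exact Unitary.star_mem (add_I_smul_mem_unitary (by simpa using h₁) (by simpa using h₂))

end Unitary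

section CayleyTransform

variable {M : Matrix n n ℂ}

noncomputable def cayley (M : Matrix n n ℂ) : Matrix n n ℂ := (M - I • 1) * (M + I • 1)⁻¹

variable (M) in
theorem conjTranspose_mul_self_add_I_smul_one :
    (M + I • 1)ᴴ * (M + I • 1) = Mᴴ * M + 1 + (2 : ℂ) • ((2 * I)⁻¹ • (M - Mᴴ)) := by
  rw [two_smul_inv_two_mul_I_smul]
  simp only [conjTranspose_add, conjTranspose_smul, conjTranspose_one, star_def, conj_I, add_mul,
    mul_add, smul_mul_assoc, mul_smul_comm, mul_one, one_mul]
  match_scalars <;> simp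

variable (M) in
theorem conjTranspose_mul_self_sub_I_smul_one :
    (M - I • 1)ᴴ * (M - I • 1) = Mᴴ * M + 1 - (2 : ℂ) • ((2 * I)⁻¹ • (M - Mᴴ)) := by
  rw [two_smul_inv_two_mul_I_smul]
  simp only [conjTranspose_sub, conjTranspose_smul, conjTranspose_one, star_def, conj_I, sub_mul,
    mul_sub, smul_mul_assoc, mul_smul_comm, mul_one, one_mul]
  match_scalars <;> simp

theorem isUnit_add_I_smul_one (hM : ((2 * I)⁻¹ • (M - Mᴴ)).PosSemidef) :
    IsUnit (M + I • 1) := by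
  have hpos : ((M + I • 1)ᴴ * (M + I • 1)).PosDef := by
    rw [conjTranspose_mul_self_add_I_smul_one]
    exact (PosDef.posSemidef_add (posSemidef_conjTranspose_mul_self M) PosDef.one).add_posSemidef
      (hM.smul zero_le_two)
  exact isUnit_of_mul_isUnit_right hpos.isUnit

theorem posSemidef_one_sub_conjTranspose_cayley_mul_cayley
    (hM : ((2 * I)⁻¹ • (M - Mᴴ)).PosSemidef) : (1 - (cayley M)ᴴ * cayley M).PosSemidef := by
  rw [cayley]
  set N := M + I • 1
  set D := M - I • 1
  have hN : N * N⁻¹ = 1 :=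
    mul_nonsing_inv _ ((isUnit_iff_isUnit_det N).mp (isUnit_add_I_smul_one hM))
  have hN' : N⁻¹ᴴ * Nᴴ = 1 := by rw [← conjTranspose_mul, hN, conjTranspose_one]
  have hconj : 1 - (D * N⁻¹)ᴴ * (D * N⁻¹) = N⁻¹ᴴ * (Nᴴ * N - Dᴴ * D) * N⁻¹ := by
    simp only [mul_sub, sub_mul, conjTranspose_mul, ← Matrix.mul_assoc]
    rw [hN', Matrix.one_mul, hN]
  have hdiff : Nᴴ * N - Dᴴ * D = (4 : ℂ) • ((2 * I)⁻¹ • (M - Mᴴ)) := by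
    rw [conjTranspose_mul_self_add_I_smul_one, conjTranspose_mul_self_sub_I_smul_one]
    module
  rw [hconj, hdiff]
  exact (hM.smul (by norm_num)).conjTranspose_mul_mul_same N⁻¹

end CayleyTransform

section L2OpNorm

open scoped Matrix.Norms.L2Operator MatrixOrder

theorem norm_toEuclideanCLM_le_one {A : Matrix n n ℂ} (h : (1 - Aᴴ * A).PosSemidef) :
    ‖toEuclideanCLM (𝕜 := ℂ) (n := n) A‖ ≤ 1 := by
  have h' : star A * A ≤ 1 := h
  rw [← CStarAlgebra.norm_le_one_iff_of_nonneg _ (star_mul_self_nonneg A),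
    CStarRing.norm_star_mul_self] at h'
  exact (mul_self_le_mul_self_iff (norm_nonneg A) zero_le_one).mpr (by rwa [mul_one])

theorem norm_toEuclideanCLM_mul_mul_of_mem_unitary {U V : Matrix n n ℂ}
    (hU : U ∈ unitary (Matrix n n ℂ)) (hV : V ∈ unitary (Matrix n n ℂ)) (A : Matrix n n ℂ) :
    ‖toEuclideanCLM (𝕜 := ℂ) (n := n) (U * A * V)‖ = ‖toEuclideanCLM (𝕜 := ℂ) (n := n) A‖ :=
  (CStarRing.norm_mul_mem_unitary _ hV).trans (CStarRing.norm_mem_unitary_mul A hU)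

end L2OpNorm

end Matrix

/-- if `α = (α₁ α₂)` is admissible and `Im(M) = (M − M*)/(2i) ≥ 0`, then
`M + iI_m` is invertible and `(α₁* + iα₂*)(M − iI_m)(M + iI_m)⁻¹(α₁ + iα₂)` is a
contraction (operator norm at most `1`). -/
theorem statement6 (m : ℕ) (α₁ α₂ : Matrix (Fin m) (Fin m) ℂ)
    (hα : Admissible (fromCols α₁ α₂)) (M : Matrix (Fin m) (Fin m) ℂ)
    (hM : ((((2 : ℂ) * Complex.I))⁻¹ • (M - Mᴴ)).PosSemidef) :
    IsUnit (M + Complex.I • 1) ∧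
    ‖Matrix.toEuclideanCLM (𝕜 := ℂ) (n := Fin m)
        ((α₁ᴴ + Complex.I • α₂ᴴ) * (M - Complex.I • 1) * (M + Complex.I • 1)⁻¹ *
          (α₁ + Complex.I • α₂))‖ ≤ 1 := by
  obtain ⟨h₁, h₂⟩ := admissible_fromCols_iff.mp hα
  refine ⟨isUnit_add_I_smul_one hM, ?_⟩
  rw [Matrix.mul_assoc (α₁ᴴ + I • α₂ᴴ), norm_toEuclideanCLM_mul_mul_of_mem_unitary
    (conjTranspose_add_I_smul_mem_unitary h₁ h₂) (add_I_smul_mem_unitary h₁ h₂)]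
  exact norm_toEuclideanCLM_le_one (posSemidef_one_sub_conjTranspose_cayley_mul_cayley hM)
end

section
/- Assume Hypothesis (H) and let ζ ∈ ℂ∖ℝ. Suppose u₁, u₂ : [0,∞) → ℂ^{m×m} are locally absolutely continuous with −u₂′ + φu₂ = ζu₁ and u₁′ + φu₁ = ζu₂ a.e. on [0,∞), u₁(0) = I_m, and set M := u₂(0); assume M is invertible. Set z := ζ². Then: (i) ψ₁ := u₁ satisfies that ψ₁ and ψ₁^{[1,1]} are locally absolutely continuous, τ₁ψ₁ = zψ₁ a.e., ψ₁(0) = I_m, and ψ₁^{[1,1]}(0) = ζM; (ii) ψ₂ := u₂M^{−1} satisfies that ψ₂ and ψ₂^{[1,2]} are locally absolutely continuous, τ₂ψ₂ = zψ₂ a.e., ψ₂(0) = I_m, and ψ₂^{[1,2]}(0) = −ζM^{−1}; (iii) consequently, the matrices M̂₁ := ζM and M̂₂ := −ζM^{−1} satisfy M̂₁ = −z M̂₂^{−1}. (This is the identity M̂_{+,0,1}(z) = ζ M^D_+(ζ,α₀) = −z M̂_{+,0,2}(z)^{−1} of Theorem 3.1, expressed through the Weyl–Titchmarsh solutions.)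 -/
/-!
Parts (i) and (ii) eliminate one component of the Dirac system. Its second equation says that
the quasi-derivative `u₁' + φu₁` of `ψ₁ = u₁` is `ζu₂`, and then the first one gives
`τ₁ψ₁ = ζ(-u₂' + φu₂) = ζ²u₁`. With the roles of the equations swapped and everything multiplied
on the right by `M⁻¹`, the same computation gives `ψ₂^{[1,2]} = -ζu₁M⁻¹` and `τ₂ψ₂ = zψ₂`. Each
of these identities is an instance of the invariance of `a' + φa = cb` under `a ↦ d • a * C`.
-/
open Matrix MeasureTheory

/-- `F` is locally absolutely continuous on `[0,∞)` with (entrywise locally integrable)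
derivative `F'`, i.e. `F x = F 0 + ∫₀ˣ F' t dt` for all `x ≥ 0`. -/
def LocAC {ι κ : Type*} (F F' : ℝ → Matrix ι κ ℂ) : Prop :=
  (∀ i j, ∀ R : ℝ, IntervalIntegrable (fun x => F' x i j) volume 0 R) ∧
  ∀ x : ℝ, 0 ≤ x → F x = F 0 + Matrix.of fun i j => ∫ t in (0:ℝ)..x, F' t i j

/-- Hypothesis (H): `φ` is measurable, locally square integrable (entrywise) on `[0,∞)`,
and `φ(x) = φ(x)*` for a.e. `x ≥ 0`. -/
def HypH {m : ℕ} (φ : ℝ → Matrix (Fin m) (Fin m) ℂ) : Prop :=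
  (∀ i j, Measurable fun x => φ x i j) ∧
  (∀ R : ℝ, ∀ i j, IntegrableOn (fun x => ‖φ x i j‖ ^ 2) (Set.Icc 0 R)) ∧
  (∀ᵐ x ∂volume.restrict (Set.Ici (0:ℝ)), (φ x)ᴴ = φ x)

namespace LocAC

variable {ι κ : Type*} {F F' : ℝ → Matrix ι κ ℂ}

theorem smul (h : LocAC F F') (c : ℂ) : LocAC (fun x => c • F x) (fun x => c • F' x) := by
  obtain ⟨hint, hF⟩ := h
  refine ⟨fun i j R => ?_, fun x hx => ?_⟩
  · simpa only [Matrix.smul_apply, smul_eq_mul] using (hint i j R).const_mul c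
  · ext i j
    simp only [hF x hx, Matrix.smul_apply, Matrix.add_apply, of_apply, smul_eq_mul,
      intervalIntegral.integral_const_mul, mul_add]

theorem mul_const [Fintype κ] {μ : Type*} (h : LocAC F F') (C : Matrix κ μ ℂ) :
    LocAC (fun x => F x * C) (fun x => F' x * C) := by
  obtain ⟨hint, hF⟩ := h
  have hterm : ∀ i j R, ∀ k ∈ Finset.univ,
      IntervalIntegrable (fun t => F' t i k * C k j) volume 0 R :=
    fun i j R k _ => (hint i k R).mul_const (C k j)
  refine ⟨fun i j R => ?_, fun x hx => ?_⟩
  · simpa only [Matrix.mul_apply, Finset.sum_fn] using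
      IntervalIntegrable.sum Finset.univ (hterm i j R)
  · ext i j
    simp only [hF x hx, Matrix.mul_apply, Matrix.add_apply, of_apply,
      intervalIntegral.integral_finsetSum (hterm i j x), intervalIntegral.integral_mul_const,
      add_mul, Finset.sum_add_distrib]

end LocAC

theorem smul_mul_right_of_add_mul_eq_smul {R A : Type*} [CommSemiring R] [Semiring A]
    [Algebra R A] {p a a' b : A} {c : R} (h : a' + p * a = c • b) (d : R) (C : A) :
    d • (a' * C) + p * (d • (a * C)) = (d * c) • (b * C) := by
  rw [mul_smul_comm, ← mul_assoc, ← smul_add, ← add_mul, h, smul_mul_assoc, smul_smul]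

theorem Matrix.smul_eq_neg_sq_smul_inv_neg_smul_inv {n K : Type*} [Fintype n] [DecidableEq n]
    [Field K] {c : K} (hc : c ≠ 0) {A : Matrix n n K} (hA : IsUnit A.det) :
    c • A = -(c ^ 2 • (-(c • A⁻¹))⁻¹) := by
  have hinv : (-(c • A⁻¹))⁻¹ = -(c⁻¹ • A) := by
    refine inv_eq_right_inv ?_
    rw [neg_mul_neg, smul_mul_smul_comm, nonsing_inv_mul _ hA, mul_inv_cancel₀ hc, one_smul]
  rw [hinv, smul_neg, neg_neg, smul_smul, sq, mul_assoc, mul_inv_cancel₀ hc, mul_one]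

theorem statement12_general (m : ℕ) (φ : ℝ → Matrix (Fin m) (Fin m) ℂ)
    (ζ : ℂ) (hζ : ζ.im ≠ 0)
    (u₁ u₁' u₂ u₂' : ℝ → Matrix (Fin m) (Fin m) ℂ)
    (h₁ : LocAC u₁ u₁') (h₂ : LocAC u₂ u₂')
    (heq₁ : ∀ᵐ x ∂volume.restrict (Set.Ici (0:ℝ)), -u₂' x + φ x * u₂ x = ζ • u₁ x)
    (heq₂ : ∀ᵐ x ∂volume.restrict (Set.Ici (0:ℝ)), u₁' x + φ x * u₁ x = ζ • u₂ x)
    (h10 : u₁ 0 = 1) (hM : IsUnit (u₂ 0)) :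
    -- (i) ψ₁ := u₁ and its quasi-derivative ψ₁^{[1,1]} = u₁' + φu₁ = ζu₂ (a.e.)
    ((∀ᵐ x ∂volume.restrict (Set.Ici (0:ℝ)), u₁' x + φ x * u₁ x = ζ • u₂ x) ∧
      LocAC (fun x => ζ • u₂ x) (fun x => ζ • u₂' x) ∧
      (∀ᵐ x ∂volume.restrict (Set.Ici (0:ℝ)),
        -(ζ • u₂' x) + φ x * (ζ • u₂ x) = (ζ ^ 2) • u₁ x) ∧
      u₁ 0 = 1 ∧ ζ • u₂ 0 = ζ • u₂ 0) ∧
    -- (ii) ψ₂ := u₂ M⁻¹ and its quasi-derivative ψ₂^{[1,2]} = ψ₂' − φψ₂ = −ζu₁M⁻¹ (a.e.)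
    (LocAC (fun x => u₂ x * (u₂ 0)⁻¹) (fun x => u₂' x * (u₂ 0)⁻¹) ∧
      (∀ᵐ x ∂volume.restrict (Set.Ici (0:ℝ)),
        u₂' x * (u₂ 0)⁻¹ - φ x * (u₂ x * (u₂ 0)⁻¹) = -(ζ • (u₁ x * (u₂ 0)⁻¹))) ∧
      LocAC (fun x => -(ζ • (u₁ x * (u₂ 0)⁻¹))) (fun x => -(ζ • (u₁' x * (u₂ 0)⁻¹))) ∧
      (∀ᵐ x ∂volume.restrict (Set.Ici (0:ℝ)),
        -(-(ζ • (u₁' x * (u₂ 0)⁻¹))) - φ x * (-(ζ • (u₁ x * (u₂ 0)⁻¹)))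
          = (ζ ^ 2) • (u₂ x * (u₂ 0)⁻¹)) ∧
      u₂ 0 * (u₂ 0)⁻¹ = 1 ∧ -(ζ • (u₁ 0 * (u₂ 0)⁻¹)) = -(ζ • (u₂ 0)⁻¹)) ∧
    -- (iii) M̂₁ = −z M̂₂⁻¹
    ζ • u₂ 0 = -((ζ ^ 2) • (-(ζ • (u₂ 0)⁻¹))⁻¹) := by
  have hζ0 : ζ ≠ 0 := fun h => hζ (by simp [h])
  have hdet : IsUnit (u₂ 0).det := (isUnit_iff_isUnit_det _).mp hM
  set M := u₂ 0
  refine ⟨⟨heq₂, h₂.smul ζ, ?_, h10, rfl⟩,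
    ⟨h₂.mul_const M⁻¹, ?_, ?_, ?_, mul_nonsing_inv _ hdet, by rw [h10, one_mul]⟩,
    smul_eq_neg_sq_smul_inv_neg_smul_inv hζ0 hdet⟩
  · filter_upwards [heq₁] with x hx
    simpa [sq] using smul_mul_right_of_add_mul_eq_smul hx ζ 1
  · filter_upwards [heq₁] with x hx
    simpa [sub_eq_add_neg] using smul_mul_right_of_add_mul_eq_smul hx (-1) M⁻¹
  · simpa only [neg_smul] using (h₁.mul_const M⁻¹).smul (-ζ)
  · filter_upwards [heq₂] with x hx
    simpa [sq] using smul_mul_right_of_add_mul_eq_smul hx ζ M⁻¹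

/-- if `U = (u₁; u₂)` solves the Dirac system `𝒟U = ζU` with
`u₁(0) = I_m` and `M := u₂(0)` invertible, `ζ ∉ ℝ`, `z := ζ²`, then (i) `ψ₁ := u₁`
solves `τ₁ψ₁ = zψ₁` with `ψ₁(0) = I`, `ψ₁^{[1,1]}(0) = ζM`; (ii) `ψ₂ := u₂M⁻¹`
solves `τ₂ψ₂ = zψ₂` with `ψ₂(0) = I`, `ψ₂^{[1,2]}(0) = −ζM⁻¹`; and (iii)
`M̂₁ := ζM` and `M̂₂ := −ζM⁻¹` satisfy `M̂₁ = −zM̂₂⁻¹`. -/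
theorem statement12 (m : ℕ) (φ : ℝ → Matrix (Fin m) (Fin m) ℂ) (hφ : HypH φ)
    (ζ : ℂ) (hζ : ζ.im ≠ 0)
    (u₁ u₁' u₂ u₂' : ℝ → Matrix (Fin m) (Fin m) ℂ)
    (h₁ : LocAC u₁ u₁') (h₂ : LocAC u₂ u₂')
    (heq₁ : ∀ᵐ x ∂volume.restrict (Set.Ici (0:ℝ)), -u₂' x + φ x * u₂ x = ζ • u₁ x)
    (heq₂ : ∀ᵐ x ∂volume.restrict (Set.Ici (0:ℝ)), u₁' x + φ x * u₁ x = ζ • u₂ x)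
    (h10 : u₁ 0 = 1) (hM : IsUnit (u₂ 0)) :
    -- (i) ψ₁ := u₁ and its quasi-derivative ψ₁^{[1,1]} = u₁' + φu₁ = ζu₂ (a.e.)
    ((∀ᵐ x ∂volume.restrict (Set.Ici (0:ℝ)), u₁' x + φ x * u₁ x = ζ • u₂ x) ∧
      LocAC (fun x => ζ • u₂ x) (fun x => ζ • u₂' x) ∧
      (∀ᵐ x ∂volume.restrict (Set.Ici (0:ℝ)),
        -(ζ • u₂' x) + φ x * (ζ • u₂ x) = (ζ ^ 2) • u₁ x) ∧
      u₁ 0 = 1 ∧ ζ • u₂ 0 = ζ • u₂ 0) ∧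
    -- (ii) ψ₂ := u₂ M⁻¹ and its quasi-derivative ψ₂^{[1,2]} = ψ₂' − φψ₂ = −ζu₁M⁻¹ (a.e.)
    (LocAC (fun x => u₂ x * (u₂ 0)⁻¹) (fun x => u₂' x * (u₂ 0)⁻¹) ∧
      (∀ᵐ x ∂volume.restrict (Set.Ici (0:ℝ)),
        u₂' x * (u₂ 0)⁻¹ - φ x * (u₂ x * (u₂ 0)⁻¹) = -(ζ • (u₁ x * (u₂ 0)⁻¹))) ∧
      LocAC (fun x => -(ζ • (u₁ x * (u₂ 0)⁻¹))) (fun x => -(ζ • (u₁' x * (u₂ 0)⁻¹))) ∧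
      (∀ᵐ x ∂volume.restrict (Set.Ici (0:ℝ)),
        -(-(ζ • (u₁' x * (u₂ 0)⁻¹))) - φ x * (-(ζ • (u₁ x * (u₂ 0)⁻¹)))
          = (ζ ^ 2) • (u₂ x * (u₂ 0)⁻¹)) ∧
      u₂ 0 * (u₂ 0)⁻¹ = 1 ∧ -(ζ • (u₁ 0 * (u₂ 0)⁻¹)) = -(ζ • (u₂ 0)⁻¹)) ∧
    -- (iii) M̂₁ = −z M̂₂⁻¹
    ζ • u₂ 0 = -((ζ ^ 2) • (-(ζ • (u₂ 0)⁻¹))⁻¹) :=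
  statement12_general m φ ζ hζ u₁ u₁' u₂ u₂' h₁ h₂ heq₁ heq₂ h10 hM
end

section
/- Let m ∈ ℕ and let γ = (γ₁ γ₂) ∈ ℂ^{m×2m} with m×m blocks γ₁, γ₂ satisfy γ𝔖₃γ* = −I_m, i.e., γ₁γ₁* − γ₂γ₂* = −I_m. Then γ₂ is invertible, and X := γ₂^{−1}γ₁ satisfies I_m − XX* = (γ₂*γ₂)^{−1}; in particular, I_m − XX* is positive definite. Moreover, with H := γ*γ ∈ ℂ^{2m×2m} written in m×m blocks, X = ((0 I_m) H (0 I_m)ᵀ)^{−1} (0 I_m) H (I_m 0)ᵀ, i.e., γ₂^{−1}γ₁ = (γ₂*γ₂)^{−1}(γ₂*γ₁). (This is the formula by which γ₂^{−1}γ₁ is recovered from the Hamiltonian H = γ*γ in the reconstruction procedure.) -/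
/-!
The relation says `γ₂γ₂* = I + γ₁γ₁*`, which is positive definite, so `γ₂` is invertible.
Conjugating by `γ₂⁻¹` then gives `I - XX* = γ₂⁻¹ (γ₂γ₂* - γ₁γ₁*) γ₂⁻* = (γ₂*γ₂)⁻¹`, and the
recovery formula holds because the lower blocks of `H = γ*γ` are `γ₂*γ₂` and `γ₂*γ₁`.
-/

open Matrix
open scoped ComplexOrder

namespace Matrix

variable {n p : Type*} [Fintype n] [DecidableEq n]

theorem isUnit_of_mul_conjTranspose_sub_eq_neg_one {K : Type*} [Field K] [PartialOrder K]
    [StarRing K] [StarOrderedRing K] [Fintype p] {A : Matrix n p K} {B : Matrix n n K}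
    (h : A * Aᴴ - B * Bᴴ = -1) : IsUnit B := by
  have hBBH : B * Bᴴ = 1 + A * Aᴴ := by
    rw [← neg_neg (1 : Matrix n n K), ← h]
    abel
  have hpd : (B * Bᴴ).PosDef :=
    hBBH ▸ PosDef.one.add_posSemidef (posSemidef_self_mul_conjTranspose A)
  exact isUnit_of_mul_isUnit_left hpd.isUnit

variable {R : Type*} [CommRing R] [StarRing R]

theorem inv_conjTranspose_mul_self_mul_conjTranspose_mul {A : Matrix n p R} {B : Matrix n n R}
    (hB : IsUnit B) : (Bᴴ * B)⁻¹ * (Bᴴ * A) = B⁻¹ * A := by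
  have hBH : IsUnit Bᴴ.det := (isUnit_iff_isUnit_det _).mp (by simpa using hB.star)
  rw [mul_inv_rev, Matrix.mul_assoc, ← Matrix.mul_assoc Bᴴ⁻¹, nonsing_inv_mul _ hBH,
    Matrix.one_mul]

theorem one_sub_inv_mul_mul_conjTranspose [Fintype p] {A : Matrix n p R} {B : Matrix n n R}
    (hB : IsUnit B) (h : A * Aᴴ - B * Bᴴ = -1) :
    1 - (B⁻¹ * A) * (B⁻¹ * A)ᴴ = (Bᴴ * B)⁻¹ := by
  have hdet := (isUnit_iff_isUnit_det B).mp hB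
  calc 1 - (B⁻¹ * A) * (B⁻¹ * A)ᴴ = B⁻¹ * (B * Bᴴ - A * Aᴴ) * B⁻¹ᴴ := by
        rw [Matrix.mul_sub, Matrix.sub_mul, ← Matrix.mul_assoc, nonsing_inv_mul _ hdet,
          Matrix.one_mul, conjTranspose_nonsing_inv, mul_nonsing_inv _ (by simpa using hdet.star),
          conjTranspose_mul, conjTranspose_nonsing_inv]
        simp only [Matrix.mul_assoc]
    _ = (Bᴴ * B)⁻¹ := by
        rw [← neg_sub, h, neg_neg, Matrix.mul_one, mul_inv_rev, conjTranspose_nonsing_inv]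

theorem conjTranspose_fromCols_mul_fromCols {m n₁ n₂ : Type*} [Fintype m]
    (A : Matrix m n₁ R) (B : Matrix m n₂ R) :
    (fromCols A B)ᴴ * fromCols A B = fromBlocks (Aᴴ * A) (Aᴴ * B) (Bᴴ * A) (Bᴴ * B) := by
  rw [conjTranspose_fromCols_eq_fromRows_conjTranspose, fromRows_mul_fromCols]

end Matrix

/-- if `γ = (γ₁ γ₂)` satisfies `γ𝔖₃γ* = −I_m`, i.e.
`γ₁γ₁* − γ₂γ₂* = −I_m`, then `γ₂` is invertible, `X := γ₂⁻¹γ₁` satisfies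
`I − XX* = (γ₂*γ₂)⁻¹` (positive definite), and `X` is recovered from the
Hamiltonian `H = γ*γ` via `X = ((0 I)H(0 I)ᵀ)⁻¹ (0 I)H(I 0)ᵀ = (γ₂*γ₂)⁻¹(γ₂*γ₁)`. -/
theorem statement17 (m : ℕ) (γ₁ γ₂ : Matrix (Fin m) (Fin m) ℂ)
    (h : γ₁ * γ₁ᴴ - γ₂ * γ₂ᴴ = -1) :
    IsUnit γ₂ ∧
    1 - (γ₂⁻¹ * γ₁) * (γ₂⁻¹ * γ₁)ᴴ = (γ₂ᴴ * γ₂)⁻¹ ∧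
    (1 - (γ₂⁻¹ * γ₁) * (γ₂⁻¹ * γ₁)ᴴ).PosDef ∧
    γ₂⁻¹ * γ₁ =
      (((fromCols γ₁ γ₂)ᴴ * fromCols γ₁ γ₂).submatrix Sum.inr Sum.inr)⁻¹ *
        ((fromCols γ₁ γ₂)ᴴ * fromCols γ₁ γ₂).submatrix Sum.inr Sum.inl ∧
    γ₂⁻¹ * γ₁ = (γ₂ᴴ * γ₂)⁻¹ * (γ₂ᴴ * γ₁) := by
  have hγ₂ : IsUnit γ₂ := isUnit_of_mul_conjTranspose_sub_eq_neg_one h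
  have hX := one_sub_inv_mul_mul_conjTranspose hγ₂ h
  have hrecover := inv_conjTranspose_mul_self_mul_conjTranspose_mul (A := γ₁) hγ₂
  refine ⟨hγ₂, hX, ?_, ?_, hrecover.symm⟩
  · rw [hX]
    exact (PosDef.conjTranspose_mul_self γ₂ (mulVec_injective_of_isUnit hγ₂)).inv
  · rw [conjTranspose_fromCols_mul_fromCols]
    exact hrecover.symm
end

section
/- Let m ∈ ℕ and let β = (β₁ β₂), γ = (γ₁ γ₂) ∈ ℂ^{m×2m} (m×m blocks) satisfy β𝔖₃β* = I_m, γ𝔖₃γ* = −I_m, and β𝔖₃γ* = 0. Then γ₂ is invertible, β₂ = β₁ γ₁* (γ₂*)^{−1}, β₁ is invertible, and with β̆ := (I_m γ₁*(γ₂*)^{−1}) ∈ ℂ^{m×2m} one has β = β₁ β̆ and β̆𝔖₃β̆* = I_m − γ₁*(γ₂γ₂*)^{−1}γ₁ is positive definite (in particular invertible). (These facts justify the recovery of β from γ via β = β₁β̆ and the differential equation β₁′ = −β₁[β̆′𝔖₃β̆*][β̆𝔖₃β̆*]^{−1} in the reconstruction procedure.) -/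
open Matrix
open scoped ComplexOrder

/-- The matrix `𝔖₃ = [[I_m, 0],[0, −I_m]]` in `m × m` blocks. -/
noncomputable def S3 (m : ℕ) : Matrix (Fin m ⊕ Fin m) (Fin m ⊕ Fin m) ℂ :=
  fromBlocks 1 0 0 (-1)

/-!
Expanding the `𝔖₃`-forms blockwise, `γ𝔖₃γ* = −I` says `γ₂γ₂* = I + γ₁γ₁*`, which is positive
definite, so `γ₂` is invertible, and `β𝔖₃γ* = 0` then solves for `β₂`, giving `β = β₁β̆`. By the
push-through identity `γ₁*(I + γ₁γ₁*)⁻¹γ₁ = I − (I + γ₁*γ₁)⁻¹`, the form `β̆𝔖₃β̆*` equals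
`(I + γ₁*γ₁)⁻¹`, which is positive definite. Finally `I = β𝔖₃β* = β₁(β̆𝔖₃β̆*)β₁*` exhibits a right
inverse of `β₁`.
-/

section PushThrough

variable {m n 𝕜 : Type*} [Fintype m] [Fintype n] [RCLike 𝕜]

theorem Matrix.posDef_one_add_mul_conjTranspose [DecidableEq m] (A : Matrix m n 𝕜) :
    (1 + A * Aᴴ).PosDef :=
  PosDef.one.add_posSemidef (posSemidef_self_mul_conjTranspose A)

theorem Matrix.posDef_one_add_conjTranspose_mul [DecidableEq n] (A : Matrix m n 𝕜) :
    (1 + Aᴴ * A).PosDef :=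
  PosDef.one.add_posSemidef (posSemidef_conjTranspose_mul_self A)

theorem Matrix.one_sub_conjTranspose_mul_inv_one_add_mul_conjTranspose_mul [DecidableEq m]
    [DecidableEq n] (A : Matrix m n 𝕜) :
    1 - Aᴴ * (1 + A * Aᴴ)⁻¹ * A = (1 + Aᴴ * A)⁻¹ := by
  have hdet : IsUnit (1 + A * Aᴴ).det :=
    (isUnit_iff_isUnit_det _).mp (posDef_one_add_mul_conjTranspose A).isUnit
  have hpush : (1 + A * Aᴴ)⁻¹ * A * (1 + Aᴴ * A) = A := by
    rw [Matrix.mul_assoc, show A * (1 + Aᴴ * A) = (1 + A * Aᴴ) * A by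
      simp only [Matrix.mul_add, Matrix.add_mul, Matrix.mul_one, Matrix.one_mul, Matrix.mul_assoc],
      ← Matrix.mul_assoc, nonsing_inv_mul _ hdet, Matrix.one_mul]
  refine (inv_eq_left_inv ?_).symm
  calc (1 - Aᴴ * (1 + A * Aᴴ)⁻¹ * A) * (1 + Aᴴ * A)
      = 1 + Aᴴ * A - Aᴴ * ((1 + A * Aᴴ)⁻¹ * A * (1 + Aᴴ * A)) := by
        simp only [Matrix.sub_mul, Matrix.mul_add, Matrix.mul_one, Matrix.one_mul, Matrix.mul_assoc]
        abel
    _ = 1 := by rw [hpush]; noncomm_ring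

theorem Matrix.posDef_one_sub_conjTranspose_mul_inv_one_add_mul_conjTranspose_mul
    [DecidableEq m] [DecidableEq n] (A : Matrix m n 𝕜) :
    (1 - Aᴴ * (1 + A * Aᴴ)⁻¹ * A).PosDef := by
  rw [one_sub_conjTranspose_mul_inv_one_add_mul_conjTranspose_mul]
  exact (posDef_one_add_conjTranspose_mul A).inv

end PushThrough

theorem Matrix.isUnit_of_posDef_mul_conjTranspose {n 𝕜 : Type*} [Fintype n] [DecidableEq n]
    [RCLike 𝕜] {A : Matrix n n 𝕜} (h : (A * Aᴴ).PosDef) : IsUnit A :=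
  isUnit_of_mul_isUnit_left h.isUnit

theorem Matrix.mul_inv_conjTranspose_mul_conjTranspose {m n α : Type*} [Fintype n]
    [DecidableEq n] [CommRing α] [StarRing α] (A : Matrix m n α) (B : Matrix n n α) :
    A * (Bᴴ)⁻¹ * (A * (Bᴴ)⁻¹)ᴴ = A * (B * Bᴴ)⁻¹ * Aᴴ := by
  rw [conjTranspose_mul, ← conjTranspose_nonsing_inv, conjTranspose_conjTranspose,
    Matrix.mul_inv_rev, ← conjTranspose_nonsing_inv]
  simp only [Matrix.mul_assoc]

theorem fromCols_mul_S3_mul_conjTranspose_fromCols {m : ℕ}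
    (A B C D : Matrix (Fin m) (Fin m) ℂ) :
    fromCols A B * S3 m * (fromCols C D)ᴴ = A * Cᴴ - B * Dᴴ := by
  rw [S3, fromCols_mul_fromBlocks, conjTranspose_fromCols_eq_fromRows_conjTranspose,
    fromCols_mul_fromRows]
  simp [sub_eq_add_neg]

/-- if `β𝔖₃β* = I_m`, `γ𝔖₃γ* = −I_m` and `β𝔖₃γ* = 0`, then `γ₂` is
invertible, `β₂ = β₁γ₁*(γ₂*)⁻¹`, `β₁` is invertible, and with
`β̆ := (I_m  γ₁*(γ₂*)⁻¹)` one has `β = β₁β̆` and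
`β̆𝔖₃β̆* = I_m − γ₁*(γ₂γ₂*)⁻¹γ₁` is positive definite. -/
theorem statement19 (m : ℕ) (β₁ β₂ γ₁ γ₂ : Matrix (Fin m) (Fin m) ℂ)
    (hβ : fromCols β₁ β₂ * S3 m * (fromCols β₁ β₂)ᴴ = 1)
    (hγ : fromCols γ₁ γ₂ * S3 m * (fromCols γ₁ γ₂)ᴴ = -1)
    (hβγ : fromCols β₁ β₂ * S3 m * (fromCols γ₁ γ₂)ᴴ = 0) :
    IsUnit γ₂ ∧
    β₂ = β₁ * γ₁ᴴ * (γ₂ᴴ)⁻¹ ∧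
    IsUnit β₁ ∧
    fromCols β₁ β₂ = β₁ * fromCols 1 (γ₁ᴴ * (γ₂ᴴ)⁻¹) ∧
    fromCols (1 : Matrix (Fin m) (Fin m) ℂ) (γ₁ᴴ * (γ₂ᴴ)⁻¹) * S3 m *
      (fromCols (1 : Matrix (Fin m) (Fin m) ℂ) (γ₁ᴴ * (γ₂ᴴ)⁻¹))ᴴ
      = 1 - γ₁ᴴ * (γ₂ * γ₂ᴴ)⁻¹ * γ₁ ∧
    (1 - γ₁ᴴ * (γ₂ * γ₂ᴴ)⁻¹ * γ₁).PosDef := by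
  rw [fromCols_mul_S3_mul_conjTranspose_fromCols] at hγ hβγ
  have hγγ : γ₂ * γ₂ᴴ = 1 + γ₁ * γ₁ᴴ := by
    linear_combination (norm := noncomm_ring) -hγ
  have hγ₂ : IsUnit γ₂ :=
    isUnit_of_posDef_mul_conjTranspose (hγγ ▸ posDef_one_add_mul_conjTranspose γ₁)
  have hβ₂ : β₂ = β₁ * γ₁ᴴ * (γ₂ᴴ)⁻¹ := by
    rw [sub_eq_zero.mp hβγ, mul_nonsing_inv_cancel_right _ _
      ((isUnit_iff_isUnit_det _).mp ((isUnit_conjTranspose γ₂).mpr hγ₂))]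
  have hβ_fac : fromCols β₁ β₂ = β₁ * fromCols 1 (γ₁ᴴ * (γ₂ᴴ)⁻¹) := by
    rw [mul_fromCols, Matrix.mul_one, hβ₂, Matrix.mul_assoc]
  have hβ_form : fromCols (1 : Matrix (Fin m) (Fin m) ℂ) (γ₁ᴴ * (γ₂ᴴ)⁻¹) * S3 m *
      (fromCols (1 : Matrix (Fin m) (Fin m) ℂ) (γ₁ᴴ * (γ₂ᴴ)⁻¹))ᴴ
      = 1 - γ₁ᴴ * (γ₂ * γ₂ᴴ)⁻¹ * γ₁ := by
    rw [fromCols_mul_S3_mul_conjTranspose_fromCols, conjTranspose_one, Matrix.mul_one,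
      mul_inv_conjTranspose_mul_conjTranspose, conjTranspose_conjTranspose]
  have hβ₁ : IsUnit β₁ := by
    refine IsUnit.of_mul_eq_one (fromCols (1 : Matrix (Fin m) (Fin m) ℂ) (γ₁ᴴ * (γ₂ᴴ)⁻¹) * S3 m *
      (fromCols (1 : Matrix (Fin m) (Fin m) ℂ) (γ₁ᴴ * (γ₂ᴴ)⁻¹))ᴴ * β₁ᴴ) ?_
    rw [hβ_fac, conjTranspose_mul] at hβ
    simpa only [Matrix.mul_assoc] using hβ
  refine ⟨hγ₂, hβ₂, hβ₁, hβ_fac, hβ_form, ?_⟩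
  rw [hγγ]
  exact posDef_one_sub_conjTranspose_mul_inv_one_add_mul_conjTranspose_mul γ₁
end
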